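/- arXiv:2408.13027 — 2 statements merged into one kernel-verified Lean document; each statement's English description precedes it below -/
import Mathlib

section
/- Let f be a nonzero polynomial in n variables of total degree d over an integral domain K, and let S be a finite nonempty subset of K. If r₁, …, r_n are chosen independently and uniformly at random from S, then the probability that f(r₁,…,r_n) = 0 is at most d / |S|. Equivalently, the number of tuples (r₁,…,r_n) ∈ Sⁿ with f(r₁,…,r_n) = 0 is at most d · |S|^{n-1}. -/
open scoped Classical in
/-- Polynomial Identity Lemma (Schwartz–Zippel), counting version: a nonzero
polynomial of total degree `d` over an integral domain has at most `d * |S|^(n-1)`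
zeros in `Sⁿ`. -/
theorem schwartz_zippel (K : Type*) [CommRing K] [IsDomain K] (n : ℕ)
    (f : MvPolynomial (Fin n) K) (hf : f ≠ 0) (S : Finset K) (hS : S.Nonempty) :
    ((Fintype.piFinset fun _ : Fin n => S).filter
        (fun r => MvPolynomial.eval r f = 0)).card
      ≤ f.totalDegree * S.card ^ (n - 1) := by
  set zeros := (Fintype.piFinset fun _ : Fin n => S).filter (fun r => MvPolynomial.eval r f = 0)
  have hS_pos : 0 < S.card := hS.card_pos
  have h_ratio := MvPolynomial.schwartz_zippel_totalDegree hf S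
  rw [div_le_div_iff₀ (by positivity) (by exact_mod_cast hS_pos)] at h_ratio
  have h_cleared : zeros.card * S.card ≤ f.totalDegree * S.card ^ n := by exact_mod_cast h_ratio
  refine Nat.le_of_mul_le_mul_right ?_ hS_pos
  calc zeros.card * S.card ≤ f.totalDegree * S.card ^ n := h_cleared
    _ ≤ f.totalDegree * S.card ^ (n - 1 + 1) := by gcongr; omega
    _ = f.totalDegree * S.card ^ (n - 1) * S.card := by ring
end

section
/- Let L be an infinite field of characteristic zero and let α, β be algebraic over L of degrees ℓ and m respectively. Then there exists an integer c with 1 ≤ c ≤ ℓ²m² + 1 such that α + c·β is a primitive element for L(α, β), i.e., L(α + c·β) = L(α, β). -/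
/-!
Two `L`-embeddings `σ, τ` of `L(α, β)` into an algebraically closed field that agree on
`α + c β` satisfy `σα + c σβ = τα + c τβ`, where `σα, τα` are roots of the minimal polynomial
of `α` and `σβ, τβ` of that of `β`. Unless `c = (τα - σα) / (σβ - τβ)` for one of the at most
`ℓ²m²` such quadruples with `σβ ≠ τβ`, this forces `σβ = τβ`, then `σα = τα`, so `σ = τ`; and an
element separating the embeddings of a separable extension generates it. Among the
`ℓ²m² + 1` integers `1, …, ℓ²m² + 1`, distinct in characteristic zero, one avoids the bad values.
-/

open Polynomial IntermediateField Finset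

section

variable {R : Type*}

theorem Finset.exists_natCast_notMem [AddMonoidWithOne R] [CharZero R] [DecidableEq R]
    (S : Finset R) : ∃ n : ℕ, 1 ≤ n ∧ n ≤ #S + 1 ∧ (n : R) ∉ S := by
  have hcard : #S < #((Icc 1 (#S + 1)).image (Nat.cast : ℕ → R)) := by
    rw [card_image_of_injective _ Nat.cast_injective, Nat.card_Icc]
    omega
  obtain ⟨_, hx, hxS⟩ := exists_mem_notMem_of_card_lt_card hcard
  obtain ⟨n, hn, rfl⟩ := mem_image.mp hx
  exact ⟨n, (mem_Icc.mp hn).1, (mem_Icc.mp hn).2, hxS⟩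

variable [Field R] [DecidableEq R]

def badScalars (A B : Finset R) : Finset R :=
  ((A ×ˢ A) ×ˢ B.offDiag).image fun p ↦ (p.1.2 - p.1.1) / (p.2.1 - p.2.2)

theorem card_badScalars_le (A B : Finset R) : #(badScalars A B) ≤ #A ^ 2 * #B ^ 2 :=
  calc #(badScalars A B) ≤ #((A ×ˢ A) ×ˢ B.offDiag) := card_image_le
    _ ≤ #A ^ 2 * #B ^ 2 := by
      rw [card_product, card_product, offDiag_card, sq, sq]
      exact Nat.mul_le_mul_left _ (Nat.sub_le _ _)

theorem eq_of_add_mul_eq_of_notMem_badScalars {A B : Finset R} {c : R}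
    (hc : c ∉ badScalars A B) {a a' b b' : R} (ha : a ∈ A) (ha' : a' ∈ A) (hb : b ∈ B)
    (hb' : b' ∈ B) (h : a + c * b = a' + c * b') : b = b' := by
  by_contra hne
  refine hc (mem_image.mpr ⟨((a, a'), (b, b')), by simp_all, ?_⟩)
  rw [div_eq_iff (sub_ne_zero.mpr hne)]
  linear_combination -h

end

theorem adjoin_add_smul_eq_adjoin_pair {F E Ω : Type*} [Field F] [Field E] [Algebra F E]
    [Algebra.IsSeparable F E] [Field Ω] [IsAlgClosed Ω] [Algebra F Ω] {α β : E} {c : F}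
    (hc : ∀ a ∈ (minpoly F α).aroots Ω, ∀ a' ∈ (minpoly F α).aroots Ω,
      ∀ b ∈ (minpoly F β).aroots Ω, ∀ b' ∈ (minpoly F β).aroots Ω,
      a + c • b = a' + c • b' → b = b') :
    F⟮α + c • β⟯ = F⟮α, β⟯ := by
  set K := F⟮α, β⟯
  have : FiniteDimensional F K := finiteDimensional_adjoin fun x _ ↦
    Algebra.IsSeparable.isIntegral F x
  let α' : K := ⟨α, subset_adjoin F _ (Set.mem_insert α {β})⟩
  let β' : K := ⟨β, subset_adjoin F _ (Set.mem_insert_of_mem α rfl)⟩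
  have hroot {x : K} (φ : K →ₐ[F] Ω) : φ x ∈ (minpoly F (x : E)).aroots Ω := by
    rw [mem_aroots, ← minpoly_eq]
    exact ⟨minpoly.ne_zero (IsIntegral.of_finite F x), minpoly.aeval_algHom _ _ _⟩
  let φ : K →ₐ[F] Ω := IsAlgClosed.lift
  have hγ : F⟮α' + c • β'⟯ = ⊤ := by
    refine (Field.primitive_element_iff_algHom_eq_of_eval F Ω (fun _ ↦ IsAlgClosed.splits _) _
      φ).mpr fun ψ hψ ↦ ?_
    simp only [map_add, map_smul] at hψ
    have hβ' := hc _ (hroot _) _ (hroot _) _ (hroot _) _ (hroot _) hψ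
    have hα' : φ α' = ψ α' := by rwa [hβ', add_left_inj] at hψ
    refine adjoin_algHom_ext F ?_
    rintro x (rfl | rfl)
    exacts [hα', hβ']
  simpa [lift_adjoin_simple, lift_top] using congrArg lift hγ

theorem exists_small_primitive_element_general (L : Type*) [Field L] [CharZero L]
    (α β : AlgebraicClosure L) (ℓ m : ℕ)
    (hℓ : (minpoly L α).natDegree = ℓ) (hm : (minpoly L β).natDegree = m) :
    ∃ c : ℕ, 1 ≤ c ∧ c ≤ ℓ ^ 2 * m ^ 2 + 1 ∧
      IntermediateField.adjoin L {α + (c : AlgebraicClosure L) * β}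
        = IntermediateField.adjoin L {α, β} := by
  classical
  set A := ((minpoly L α).aroots (AlgebraicClosure L)).toFinset
  set B := ((minpoly L β).aroots (AlgebraicClosure L)).toFinset
  have hA : #A ≤ ℓ :=
    hℓ ▸ (Multiset.toFinset_card_le _).trans IsAlgClosed.card_aroots_eq_natDegree.le
  have hB : #B ≤ m :=
    hm ▸ (Multiset.toFinset_card_le _).trans IsAlgClosed.card_aroots_eq_natDegree.le
  obtain ⟨c, hc1, hcle, hc⟩ := (badScalars A B).exists_natCast_notMem
  refine ⟨c, hc1, hcle.trans ?_, ?_⟩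
  · grw [card_badScalars_le, hA, hB]
  · have hsmul : ∀ x : AlgebraicClosure L, (c : L) • x = c * x := fun x ↦ by
      rw [Algebra.smul_def, map_natCast]
    rw [← hsmul]
    refine adjoin_add_smul_eq_adjoin_pair (Ω := AlgebraicClosure L)
      fun a ha a' ha' b hb b' hb' h ↦ ?_
    rw [hsmul, hsmul] at h
    exact eq_of_add_mul_eq_of_notMem_badScalars hc (Multiset.mem_toFinset.mpr ha)
      (Multiset.mem_toFinset.mpr ha') (Multiset.mem_toFinset.mpr hb)
      (Multiset.mem_toFinset.mpr hb') h

/-- Quantitative primitive element theorem: over an infinite field `L` of characteristic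
zero, if `α, β` are algebraic of degrees `ℓ` and `m`, then some integer
`1 ≤ c ≤ ℓ²m² + 1` makes `α + c·β` a primitive element of `L(α, β)`. -/
theorem exists_small_primitive_element (L : Type*) [Field L] [CharZero L] [Infinite L]
    (α β : AlgebraicClosure L) (ℓ m : ℕ)
    (hℓ : (minpoly L α).natDegree = ℓ) (hm : (minpoly L β).natDegree = m) :
    ∃ c : ℕ, 1 ≤ c ∧ c ≤ ℓ ^ 2 * m ^ 2 + 1 ∧
      IntermediateField.adjoin L {α + (c : AlgebraicClosure L) * β}
        = IntermediateField.adjoin L {α, β} :=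
  exists_small_primitive_element_general L α β ℓ m hℓ hm
end
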